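/- (Deterministic per-iteration bound underlying Theorem 4.3.) Let λ ≥ 0, γ > 0, δ ≥ 0, let A be a real m×n matrix, let b, b̃ ∈ ℝᵐ with ‖b̃ − b‖ ≤ δ, and let x̂ ∈ ℝⁿ with Ax̂ = b. Set C = 2γ + ‖A‖₂². Let y₀, y₁ ∈ ℝᵐ and an index i be given, and define v = y₁ − y₀, x₁ = S_λ(Aᵀy₁), G = A·x₁ − b̃, u = Gᵢ·eᵢ, and G̃ = G − u. Assume {u, v} is linearly independent. With Δ = Gᵢ²·‖v‖² − ⟨u,v⟩², let α = (Gᵢ²·‖v‖² − ⟨u,v⟩·⟨G,v⟩)/(C·Δ) and w = Gᵢ²·(⟨u,v⟩ − ⟨G,v⟩)/(C·Δ), and set y₂ = y₁ − α·u + w·v and x₂ = S_λ(Aᵀy₂). Define D_j = f(x̂) − f(x_j) − ⟨Aᵀy_j, x̂ − x_j⟩ for j = 1, 2. Then D₂ ≤ D₁ − (1/(2C))·Gᵢ² + δ²/(4γ) − (1/(2C))·( ⟨G̃,v⟩²/‖v‖² + ⟨v,u⟩²·⟨G̃,v⟩²/(‖v‖²·(‖v‖²·Gᵢ² − ⟨v,u⟩²))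 ). -/

import Mathlib

open scoped RealInnerProductSpace BigOperators
open Matrix

noncomputable def fobj {n : ℕ} (lam : ℝ) (x : EuclideanSpace ℝ (Fin n)) : ℝ :=
  lam * (∑ i, |x i|) + (1 / 2) * ‖x‖ ^ 2

noncomputable def softShrink {n : ℕ} (lam : ℝ) (x : EuclideanSpace ℝ (Fin n)) :
    EuclideanSpace ℝ (Fin n) :=
  WithLp.toLp 2 (fun i => Real.sign (x i) * max (|x i| - lam) 0)

noncomputable def mulVecE {m n : ℕ} (A : Matrix (Fin m) (Fin n) ℝ)
    (x : EuclideanSpace ℝ (Fin n)) : EuclideanSpace ℝ (Fin m) :=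
  Matrix.toEuclideanLin A x

/-- The operator (spectral) norm `‖A‖₂` of the linear map `x ↦ Ax` between
Euclidean spaces. -/
noncomputable def matOpNorm {m n : ℕ} (A : Matrix (Fin m) (Fin n) ℝ) : ℝ :=
  ‖LinearMap.toContinuousLinearMap (Matrix.toEuclideanLin A)‖

/-! ### Auxiliary scalar lemmas -/

noncomputable def sshr (lam t : ℝ) : ℝ := Real.sign t * max (|t| - lam) 0

lemma sshr_eq (lam : ℝ) (hlam : 0 ≤ lam) (t : ℝ) :
    sshr lam t = t - max (-lam) (min lam t) := by
  unfold sshr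
  rcases lt_trichotomy t 0 with h | h | h
  · rw [Real.sign_of_neg h, abs_of_neg h]
    rcases le_total t (-lam) with h2 | h2
    · rw [max_eq_left (by linarith), min_eq_right (by linarith), max_eq_left h2]; ring
    · rw [max_eq_right (by linarith), min_eq_right (by linarith), max_eq_right h2]; ring
  · subst h
    simp [Real.sign_zero, min_eq_right hlam, max_eq_right (by linarith : -lam ≤ (0:ℝ))]
  · rw [Real.sign_of_pos h, abs_of_pos h]
    rcases le_total lam t with h2 | h2
    · rw [max_eq_left (by linarith), min_eq_left h2, max_eq_right (by linarith)]; ring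
    · rw [max_eq_right (by linarith), min_eq_right h2, max_eq_right (by linarith)]; ring

lemma clamp_mem (lam t : ℝ) (hlam : 0 ≤ lam) :
    -lam ≤ max (-lam) (min lam t) ∧ max (-lam) (min lam t) ≤ lam := by
  constructor
  · exact le_max_left _ _
  · rcases le_total (min lam t) (-lam) with h | h
    · rw [max_eq_left h]; linarith
    · rw [max_eq_right h]; exact min_le_left _ _

lemma clamp_proj (lam t z : ℝ) (hz1 : -lam ≤ z) (hz2 : z ≤ lam) :
    0 ≤ (t - max (-lam) (min lam t)) * (max (-lam) (min lam t) - z) := by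
  rcases le_total lam t with h | h
  · rw [min_eq_left h, max_eq_right (by linarith)]
    exact mul_nonneg (by linarith) (by linarith)
  · rw [min_eq_right h]
    rcases le_total t (-lam) with h2 | h2
    · rw [max_eq_left h2]
      nlinarith
    · rw [max_eq_right h2]; simp

lemma sshr_descent (lam : ℝ) (hlam : 0 ≤ lam) (a b : ℝ) :
    (1/2) * sshr lam b ^ 2 ≤ (1/2) * sshr lam a ^ 2 + sshr lam a * (b - a)
      + (1/2) * (b - a) ^ 2 := by
  rw [sshr_eq lam hlam a, sshr_eq lam hlam b]
  have hp := clamp_mem lam a hlam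
  have h := clamp_proj lam b (max (-lam) (min lam a)) hp.1 hp.2
  nlinarith [sq_nonneg (max (-lam) (min lam b) - max (-lam) (min lam a))]

lemma sshr_conj (lam : ℝ) (t : ℝ) :
    t * sshr lam t = lam * |sshr lam t| + sshr lam t ^ 2 := by
  unfold sshr
  rcases lt_trichotomy t 0 with h | h | h
  · rw [Real.sign_of_neg h, abs_of_neg h]
    rcases le_total (-t - lam) 0 with h2 | h2
    · rw [max_eq_right h2]; simp
    · rw [max_eq_left h2, abs_of_nonpos (by nlinarith)]; ring
  · subst h; simp
  · rw [Real.sign_of_pos h, abs_of_pos h]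
    rcases le_total (t - lam) 0 with h2 | h2
    · rw [max_eq_right h2]; simp
    · rw [max_eq_left h2, abs_of_nonneg (by nlinarith)]; ring

/-! ### Auxiliary vector lemmas -/

lemma norm_sq_sum {n : ℕ} (x : EuclideanSpace ℝ (Fin n)) :
    ‖x‖ ^ 2 = ∑ i, x i ^ 2 := by
  rw [← real_inner_self_eq_norm_sq, PiLp.inner_apply]
  simp [RCLike.inner_apply, sq]

lemma inner_sum' {n : ℕ} (x y : EuclideanSpace ℝ (Fin n)) :
    ⟪x, y⟫ = ∑ i, x i * y i := by
  rw [PiLp.inner_apply]; simp [RCLike.inner_apply]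
  exact Finset.sum_congr rfl fun _ _ => mul_comm _ _

lemma softShrink_apply {n : ℕ} (lam : ℝ) (x : EuclideanSpace ℝ (Fin n)) (i : Fin n) :
    softShrink lam x i = sshr lam (x i) := rfl

lemma conj_identity {n : ℕ} (lam : ℝ) (z : EuclideanSpace ℝ (Fin n)) :
    fobj lam (softShrink lam z) = ⟪z, softShrink lam z⟫
      - (1/2) * ‖softShrink lam z‖ ^ 2 := by
  unfold fobj
  rw [inner_sum', norm_sq_sum]
  rw [Finset.mul_sum, Finset.mul_sum, ← Finset.sum_sub_distrib, ← Finset.sum_add_distrib]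
  apply Finset.sum_congr rfl
  intro i _
  rw [softShrink_apply]
  have := sshr_conj lam (z i)
  nlinarith [this]

lemma descent_vec {n : ℕ} (lam : ℝ) (hlam : 0 ≤ lam) (z z' : EuclideanSpace ℝ (Fin n)) :
    (1/2) * ‖softShrink lam z'‖ ^ 2 ≤ (1/2) * ‖softShrink lam z‖ ^ 2
      + ⟪softShrink lam z, z' - z⟫ + (1/2) * ‖z' - z‖ ^ 2 := by
  rw [norm_sq_sum, norm_sq_sum, norm_sq_sum, inner_sum']
  rw [Finset.mul_sum, Finset.mul_sum, Finset.mul_sum, ← Finset.sum_add_distrib,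
    ← Finset.sum_add_distrib]
  apply Finset.sum_le_sum
  intro i _
  have hsub : (z' - z) i = z' i - z i := rfl
  rw [softShrink_apply, softShrink_apply, hsub]
  have := sshr_descent lam hlam (z i) (z' i)
  nlinarith [this]

/-! ### Auxiliary matrix lemmas -/

lemma mulVecE_adjoint {m n : ℕ} (A : Matrix (Fin m) (Fin n) ℝ)
    (x : EuclideanSpace ℝ (Fin n)) (y : EuclideanSpace ℝ (Fin m)) :
    ⟪mulVecE A x, y⟫ = ⟪x, mulVecE Aᵀ y⟫ := by
  have h : Aᵀ = Aᴴ := (Matrix.conjTranspose_eq_transpose_of_trivial A).symm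
  rw [mulVecE, mulVecE, h, Matrix.toEuclideanLin_conjTranspose_eq_adjoint,
    LinearMap.adjoint_inner_right]

lemma mulVecE_sub {m n : ℕ} (A : Matrix (Fin m) (Fin n) ℝ)
    (x y : EuclideanSpace ℝ (Fin n)) :
    mulVecE A (x - y) = mulVecE A x - mulVecE A y := by
  unfold mulVecE; rw [map_sub]

lemma mulVecE_norm_le {m n : ℕ} (A : Matrix (Fin m) (Fin n) ℝ)
    (x : EuclideanSpace ℝ (Fin n)) :
    ‖mulVecE A x‖ ≤ matOpNorm A * ‖x‖ := by
  have := (LinearMap.toContinuousLinearMap (Matrix.toEuclideanLin A)).le_opNorm x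
  simpa [mulVecE, matOpNorm] using this

lemma mulVecE_transpose_norm_le {m n : ℕ} (A : Matrix (Fin m) (Fin n) ℝ)
    (y : EuclideanSpace ℝ (Fin m)) :
    ‖mulVecE Aᵀ y‖ ≤ matOpNorm A * ‖y‖ := by
  rcases eq_or_lt_of_le (norm_nonneg (mulVecE Aᵀ y)) with h | h
  · rw [← h]
    exact mul_nonneg (norm_nonneg _) (norm_nonneg _)
  · have h1 : ‖mulVecE Aᵀ y‖ ^ 2 = ⟪mulVecE A (mulVecE Aᵀ y), y⟫ := by
      rw [← real_inner_self_eq_norm_sq, ← mulVecE_adjoint A (mulVecE Aᵀ y) y]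
    have h2 : ⟪mulVecE A (mulVecE Aᵀ y), y⟫ ≤ ‖mulVecE A (mulVecE Aᵀ y)‖ * ‖y‖ :=
      real_inner_le_norm _ _
    have h3 := mulVecE_norm_le A (mulVecE Aᵀ y)
    have h4 : (0:ℝ) ≤ ‖y‖ := norm_nonneg _
    nlinarith [h]

lemma algebra_key (gi gv uv vv C : ℝ) (hC : C ≠ 0) (hvv : vv ≠ 0)
    (h1 : gi^2*vv - uv^2 ≠ 0) (h2 : vv*gi^2 - uv^2 ≠ 0) :
    (-((gi^2*vv - uv*gv)/(C*(gi^2*vv - uv^2)))*gi^2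
        + (gi^2*(uv-gv)/(C*(gi^2*vv - uv^2)))*gv)
      + (C/2)*(((gi^2*vv - uv*gv)/(C*(gi^2*vv - uv^2)))^2*gi^2
        - 2*((gi^2*vv - uv*gv)/(C*(gi^2*vv - uv^2)))*(gi^2*(uv-gv)/(C*(gi^2*vv - uv^2)))*uv
        + (gi^2*(uv-gv)/(C*(gi^2*vv - uv^2)))^2*vv)
      = -(1/(2*C))*gi^2
        - (1/(2*C))*((gv-uv)^2/vv + uv^2*(gv-uv)^2/(vv*(vv*gi^2 - uv^2))) := by
  field_simp
  ring

set_option maxHeartbeats 1000000 in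
/-- Deterministic per-iteration bound underlying Theorem 4.3 (Quantile-RaSK-MM):
one step with the minimal-dual-function momentum parameters decreases the Bregman
distance to the solution up to the contamination term `δ²/(4γ)`. -/
theorem per_iteration_bound {m n : ℕ} (lam γ δ : ℝ)
    (hlam : 0 ≤ lam) (hγ : 0 < γ) (hδ : 0 ≤ δ)
    (A : Matrix (Fin m) (Fin n) ℝ) (b btil : EuclideanSpace ℝ (Fin m))
    (hcont : ‖btil - b‖ ≤ δ)
    (xhat : EuclideanSpace ℝ (Fin n)) (hxhat : mulVecE A xhat = b)
    (C : ℝ) (hC : C = 2 * γ + matOpNorm A ^ 2)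
    (y₀ y₁ : EuclideanSpace ℝ (Fin m)) (i : Fin m)
    (v : EuclideanSpace ℝ (Fin m)) (hv : v = y₁ - y₀)
    (x₁ : EuclideanSpace ℝ (Fin n)) (hx₁ : x₁ = softShrink lam (mulVecE Aᵀ y₁))
    (G : EuclideanSpace ℝ (Fin m)) (hG : G = mulVecE A x₁ - btil)
    (u : EuclideanSpace ℝ (Fin m)) (hu : u = G i • EuclideanSpace.single i (1 : ℝ))
    (Gtil : EuclideanSpace ℝ (Fin m)) (hGtil : Gtil = G - u)
    (hind : LinearIndependent ℝ ![u, v])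
    (Δ : ℝ) (hΔ : Δ = G i ^ 2 * ‖v‖ ^ 2 - ⟪u, v⟫ ^ 2)
    (α w : ℝ)
    (hα : α = (G i ^ 2 * ‖v‖ ^ 2 - ⟪u, v⟫ * ⟪G, v⟫) / (C * Δ))
    (hw : w = G i ^ 2 * (⟪u, v⟫ - ⟪G, v⟫) / (C * Δ))
    (y₂ : EuclideanSpace ℝ (Fin m)) (hy₂ : y₂ = y₁ - α • u + w • v)
    (x₂ : EuclideanSpace ℝ (Fin n)) (hx₂ : x₂ = softShrink lam (mulVecE Aᵀ y₂))
    (D₁ D₂ : ℝ)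
    (hD₁ : D₁ = fobj lam xhat - fobj lam x₁ - ⟪mulVecE Aᵀ y₁, xhat - x₁⟫)
    (hD₂ : D₂ = fobj lam xhat - fobj lam x₂ - ⟪mulVecE Aᵀ y₂, xhat - x₂⟫) :
    D₂ ≤ D₁ - (1 / (2 * C)) * G i ^ 2 + δ ^ 2 / (4 * γ) -
      (1 / (2 * C)) *
        (⟪Gtil, v⟫ ^ 2 / ‖v‖ ^ 2 +
          ⟪v, u⟫ ^ 2 * ⟪Gtil, v⟫ ^ 2 /
            (‖v‖ ^ 2 * (‖v‖ ^ 2 * G i ^ 2 - ⟪v, u⟫ ^ 2))) := by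
  -- notation
  set z₁ : EuclideanSpace ℝ (Fin n) := mulVecE Aᵀ y₁ with hz₁
  set z₂ : EuclideanSpace ℝ (Fin n) := mulVecE Aᵀ y₂ with hz₂
  set d : EuclideanSpace ℝ (Fin m) := y₂ - y₁ with hdd
  -- linear independence consequences
  have hpair := (LinearIndependent.pair_iff).mp hind
  have hvne : v ≠ 0 := by
    intro h
    have := (hpair 0 1 (by simp [h])).2
    norm_num at this
  have hvvpos : (0:ℝ) < ‖v‖ ^ 2 := pow_pos (norm_pos_iff.mpr hvne) 2
  -- strict Cauchy-Schwarz
  have huu : ⟪u, u⟫ = G i ^ 2 := by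
    simp [hu, real_inner_smul_left, real_inner_smul_right,
      EuclideanSpace.inner_single_left, EuclideanSpace.single_apply, sq, norm_smul,
      EuclideanSpace.norm_single, abs_mul_abs_self]
  have hnu : ‖u‖ ^ 2 = G i ^ 2 := by rw [← real_inner_self_eq_norm_sq, huu]
  have hcs1 : ⟪u, v⟫ < ‖u‖ * ‖v‖ := by
    rw [inner_lt_norm_mul_iff_real]
    intro h
    have h0 : ‖v‖ • u + (-‖u‖) • v = 0 := by
      rw [neg_smul, h]; abel
    have := (hpair _ _ h0).1
    exact hvne (norm_eq_zero.mp this)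
  have hcs2 : -⟪u, v⟫ < ‖u‖ * ‖v‖ := by
    have : ⟪u, -v⟫ < ‖u‖ * ‖-v‖ := by
      rw [inner_lt_norm_mul_iff_real]
      intro h
      have h0 : ‖(-v : EuclideanSpace ℝ (Fin m))‖ • u + ‖u‖ • v = 0 := by
        rw [h]; simp
      have := (hpair _ _ h0).1
      simp only [norm_neg] at this
      exact hvne (norm_eq_zero.mp this)
    simpa [inner_neg_right, norm_neg] using this
  have hΔpos : (0:ℝ) < Δ := by
    rw [hΔ, ← hnu]
    nlinarith [hcs1, hcs2]
  have hCpos : (0:ℝ) < C := by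
    have := sq_nonneg (matOpNorm A); rw [hC]; linarith
  -- step 1: key descent inequality
  have hconj1 : fobj lam x₁ = ⟪z₁, x₁⟫ - (1/2) * ‖x₁‖ ^ 2 := by
    rw [hx₁]; exact conj_identity lam z₁
  have hconj2 : fobj lam x₂ = ⟪z₂, x₂⟫ - (1/2) * ‖x₂‖ ^ 2 := by
    rw [hx₂]; exact conj_identity lam z₂
  have hzd : z₂ - z₁ = mulVecE Aᵀ d := by rw [hdd, mulVecE_sub]
  have hdesc : (1/2) * ‖x₂‖ ^ 2 ≤ (1/2) * ‖x₁‖ ^ 2 + ⟪x₁, z₂ - z₁⟫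
      + (1/2) * ‖z₂ - z₁‖ ^ 2 := by
    rw [hx₁, hx₂]; exact descent_vec lam hlam z₁ z₂
  have hip1 : ⟪x₁, z₂ - z₁⟫ = ⟪mulVecE A x₁, d⟫ := by
    rw [hzd, ← mulVecE_adjoint]
  have hip2 : ⟪z₂ - z₁, xhat⟫ = ⟪b, d⟫ := by
    rw [hzd, real_inner_comm, ← mulVecE_adjoint, hxhat]
  have hAx₁ : mulVecE A x₁ = G + (btil - b) + b := by rw [hG]; abel
  have hip3 : ⟪mulVecE A x₁, d⟫ = ⟪G, d⟫ + ⟪btil - b, d⟫ + ⟪b, d⟫ := by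
    rw [hAx₁, inner_add_left, inner_add_left]
  have hcb : ⟪btil - b, d⟫ ≤ δ * ‖d‖ :=
    le_trans (real_inner_le_norm _ _) (mul_le_mul_of_nonneg_right hcont (norm_nonneg d))
  have hnrm : ‖z₂ - z₁‖ ≤ matOpNorm A * ‖d‖ := by
    rw [hzd]; exact mulVecE_transpose_norm_le A d
  have hnrm2 : ‖z₂ - z₁‖ ^ 2 ≤ matOpNorm A ^ 2 * ‖d‖ ^ 2 := by
    nlinarith [norm_nonneg (z₂ - z₁), norm_nonneg d,
      mul_nonneg (norm_nonneg (mulVecE A (0 : EuclideanSpace ℝ (Fin n)))) (norm_nonneg d)]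
  have hamgm : δ * ‖d‖ ≤ γ * ‖d‖ ^ 2 + δ ^ 2 / (4 * γ) := by
    have hq : 4 * γ * (δ ^ 2 / (4 * γ)) = δ ^ 2 := by field_simp
    nlinarith [sq_nonneg (2 * γ * ‖d‖ - δ), hγ]
  have hD1' : D₁ = fobj lam xhat - ⟪z₁, xhat⟫ + (1/2) * ‖x₁‖ ^ 2 := by
    rw [hD₁, hconj1, inner_sub_right]; ring
  have hD2' : D₂ = fobj lam xhat - ⟪z₂, xhat⟫ + (1/2) * ‖x₂‖ ^ 2 := by
    rw [hD₂, hconj2, inner_sub_right]; ring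
  have hz21 : ⟪z₂, xhat⟫ - ⟪z₁, xhat⟫ = ⟪b, d⟫ := by
    rw [← hip2, inner_sub_left]
  have key : D₂ ≤ D₁ + ⟪G, d⟫ + (C/2) * ‖d‖ ^ 2 + δ ^ 2 / (4 * γ) := by
    have h1 : D₂ - D₁ = (1/2) * ‖x₂‖ ^ 2 - (1/2) * ‖x₁‖ ^ 2 - ⟪b, d⟫ := by
      rw [hD1', hD2']; linarith [hz21]
    have hC2 : C / 2 = γ + matOpNorm A ^ 2 / 2 := by rw [hC]; ring
    rw [hC2]
    linarith [hdesc, hip1, hip3, hcb, hamgm, hnrm2, h1]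
  -- step 2: inner product computations
  have hGu : ⟪G, u⟫ = G i ^ 2 := by
    simp [hu, real_inner_smul_right, EuclideanSpace.inner_single_right, sq]
  have hvu : ⟪v, u⟫ = ⟪u, v⟫ := real_inner_comm u v
  have hGtilv : ⟪Gtil, v⟫ = ⟪G, v⟫ - ⟪u, v⟫ := by rw [hGtil, inner_sub_left]
  have hdvec : d = (-α) • u + w • v := by
    rw [hdd, hy₂]; module
  have hGd : ⟪G, d⟫ = -α * G i ^ 2 + w * ⟪G, v⟫ := by
    rw [hdvec, inner_add_right, real_inner_smul_right, real_inner_smul_right, hGu]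
  have hdnorm : ‖d‖ ^ 2 = α ^ 2 * G i ^ 2 - 2 * α * w * ⟪u, v⟫ + w ^ 2 * ‖v‖ ^ 2 := by
    have hvvi : ⟪v, v⟫ = ‖v‖ ^ 2 := real_inner_self_eq_norm_sq v
    rw [← real_inner_self_eq_norm_sq, hdvec]
    simp only [inner_add_left, inner_add_right, real_inner_smul_left,
      real_inner_smul_right, huu, hvvi, real_inner_comm v u]
    ring
  -- step 3: algebraic identity for the optimal value
  have hΔ' : Δ = G i ^ 2 * ‖v‖ ^ 2 - ⟪u, v⟫ ^ 2 := hΔ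
  have halg := algebra_key (G i) ⟪G, v⟫ ⟪u, v⟫ (‖v‖ ^ 2) C (ne_of_gt hCpos)
    (ne_of_gt hvvpos) (by rw [← hΔ']; exact ne_of_gt hΔpos)
    (by rw [show ‖v‖^2 * G i ^2 - ⟪u,v⟫^2 = G i ^2 * ‖v‖^2 - ⟪u,v⟫^2 by ring, ← hΔ']
        exact ne_of_gt hΔpos)
  rw [hα, hw, hΔ'] at hGd hdnorm
  have hfinal : ⟪G, d⟫ + (C/2) * ‖d‖ ^ 2
      = -(1/(2*C)) * G i ^ 2
        - (1/(2*C)) * ((⟪G,v⟫ - ⟪u,v⟫)^2 / ‖v‖^2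
          + ⟪u,v⟫^2 * (⟪G,v⟫ - ⟪u,v⟫)^2 / (‖v‖^2 * (‖v‖^2 * G i ^2 - ⟪u,v⟫^2))) := by
    rw [hGd, hdnorm]
    convert halg using 2 <;> ring
  rw [hGtilv, hvu]
  linarith [key, hfinal]
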